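/- arXiv:1904.06708 — 3 statements merged into one kernel-verified Lean document; each statement's English description precedes it below -/
import Mathlib

section
/- Let Y and Z be independent random variables with Y ~ Exp(λ_Y) and Z ~ Exp(λ_Z), where λ_Y, λ_Z > 0. Let μ : (0,∞) → (0,∞) satisfy μ(δ)/δ → a as δ → 0⁺ for some finite a ≥ 0, and let h : (0,∞) → (0,∞) be continuous with h(δ) → 0 and δ/h(δ) → d₁ for some finite d₁ as δ → 0⁺. Then lim_{δ → 0⁺} (1/h(δ)) · P( δ · f(Y/δ, Z/μ(δ)) < h(δ) ) = λ_Y + a·λ_Z. -/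
/-!
For `y, z ≥ 0` the event `δ f(y/δ, z/μ) < h` reads `(y - h)(z - η) < c` with `η = hμ/δ` and
`c = h(μ + η)`. It contains the corner `{Y ≤ h} ∪ {Z ≤ η}`, of probability
`1 - e^{-(λ_Y h + λ_Z η)} = (λ_Y + a λ_Z) h + o(h)`; the rest of it is the hyperbolic region
`(Y - h)(Z - η) < c` above the corner. Cutting that region into dyadic shells in `Y - h` bounds its
probability by `O(h² + c log(1/h))`, which is `o(h)` because `c / h = (μ/δ)(δ + h) = O(h)` when
`δ/h` stays bounded.
-/

open MeasureTheory ProbabilityTheory Filter Set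

/-- The amplify-and-forward combining function `f(x,y) = x·y/(x+y+1)`. -/
noncomputable def f (x y : ℝ) : ℝ := x * y / (x + y + 1)

open Real Topology

namespace ProbabilityTheory

lemma exponentialPDF_le {r : ℝ} (hr : 0 ≤ r) (x : ℝ) : exponentialPDF r x ≤ ENNReal.ofReal r := by
  rw [exponentialPDF_eq]
  refine ENNReal.ofReal_le_ofReal ?_
  split_ifs with hx
  · exact mul_le_of_le_one_right hr (exp_le_one_iff.2 (neg_nonpos.2 (mul_nonneg hr hx)))
  · exact hr

lemma expMeasure_Ioc_le {r : ℝ} (hr : 0 ≤ r) (s t : ℝ) :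
    expMeasure r (Ioc s t) ≤ ENNReal.ofReal (r * (t - s)) :=
  calc expMeasure r (Ioc s t) = ∫⁻ x in Ioc s t, exponentialPDF r x :=
        withDensity_apply _ measurableSet_Ioc
    _ ≤ ∫⁻ _ in Ioc s t, ENNReal.ofReal r :=
        setLIntegral_mono' measurableSet_Ioc fun x _ => exponentialPDF_le hr x
    _ = ENNReal.ofReal (r * (t - s)) := by
        rw [setLIntegral_const, Real.volume_Ioc, ← ENNReal.ofReal_mul hr]

lemma expMeasure_Iic {r x : ℝ} (hr : 0 < r) (hx : 0 ≤ x) :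
    expMeasure r (Iic x) = ENNReal.ofReal (1 - exp (-(r * x))) := by
  have := isProbabilityMeasure_expMeasure hr
  rw [← ofReal_cdf, cdf_expMeasure_eq hr, if_pos hx]

lemma expMeasure_real_Ioi {r x : ℝ} (hr : 0 < r) (hx : 0 ≤ x) :
    (expMeasure r).real (Ioi x) = exp (-(r * x)) := by
  have := isProbabilityMeasure_expMeasure hr
  rw [← compl_Iic, probReal_compl_eq_one_sub measurableSet_Iic, measureReal_def,
    expMeasure_Iic hr hx, ENNReal.toReal_ofReal (sub_nonneg.2 (exp_le_one_iff.2 _))]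
  · ring
  · exact neg_nonpos.2 (mul_nonneg hr.le hx)

lemma ae_nonneg_expMeasure {r : ℝ} (hr : 0 < r) : ∀ᵐ x ∂expMeasure r, 0 ≤ x := by
  refine measure_mono_null (t := Iic 0) (fun x (hx : ¬ 0 ≤ x) => (not_le.1 hx).le) ?_
  simp [expMeasure_Iic hr le_rfl]

end ProbabilityTheory

lemma tendsto_one_sub_exp_neg_mul_div {α : Type*} {l : Filter α} {g k : α → ℝ} {L : ℝ}
    (hg : Tendsto g l (𝓝[>] 0)) (hk : Tendsto k l (𝓝 L)) :
    Tendsto (fun x => (1 - exp (-(g x * k x))) / g x) l (𝓝 L) := by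
  have hg0 : Tendsto g l (𝓝 0) := tendsto_nhdsWithin_iff.1 hg |>.1
  have hgk : Tendsto (fun x => g x * k x) l (𝓝 0) := by simpa using hg0.mul hk
  have hbound : Tendsto (fun x => g x * k x ^ 2) l (𝓝 0) := by simpa using hg0.mul (hk.pow 2)
  suffices Tendsto (fun x => (1 - exp (-(g x * k x))) / g x - k x) l (𝓝 0) by
    simpa using this.add hk
  refine squeeze_zero_norm' ?_ hbound
  have hgk' : Tendsto (fun x => |g x * k x|) l (𝓝 0) := by simpa using hgk.abs
  filter_upwards [tendsto_nhdsWithin_iff.1 hg |>.2, hgk'.eventually_le_const zero_lt_one]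
    with x hx hsmall
  have hexp := abs_exp_sub_one_sub_id_le (x := -(g x * k x)) (by simpa using hsmall)
  rw [Real.norm_eq_abs, div_sub' hx.ne', abs_div, abs_of_pos (a := g x) hx, div_le_iff₀ hx]
  calc |1 - exp (-(g x * k x)) - g x * k x| = |exp (-(g x * k x)) - 1 - -(g x * k x)| := by
        rw [← abs_neg]; ring_nf
    _ ≤ (-(g x * k x)) ^ 2 := hexp
    _ = g x * k x ^ 2 * g x := by ring

lemma one_le_mul_two_pow_natCeil_neg_logb {x : ℝ} (hx : 0 < x) :
    1 ≤ x * 2 ^ ⌈-logb 2 x⌉₊ := by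
  calc 1 = x * 2 ^ (-logb 2 x) := by
        rw [rpow_neg zero_le_two, rpow_logb zero_lt_two (by norm_num) hx, mul_inv_cancel₀ hx.ne']
    _ ≤ x * 2 ^ ⌈-logb 2 x⌉₊ := by
        rw [← rpow_natCast]
        exact mul_le_mul_of_nonneg_left (rpow_le_rpow_of_exponent_le one_le_two (Nat.le_ceil _)) hx.le

lemma tendsto_natCeil_neg_logb_mul_self :
    Tendsto (fun x : ℝ => (⌈-logb 2 x⌉₊ : ℝ) * x) (𝓝[>] 0) (𝓝 0) := by
  have hlog : Tendsto (fun x => -(log x * x) / log 2 + x) (𝓝[>] 0) (𝓝 0) := by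
    have := ((tendsto_log_mul_rpow_nhdsGT_zero zero_lt_one).neg.div_const (log 2)).add
      (tendsto_id.mono_left nhdsWithin_le_nhds)
    simpa using this
  refine tendsto_of_tendsto_of_tendsto_of_le_of_le' tendsto_const_nhds hlog ?_ ?_
  · filter_upwards [self_mem_nhdsWithin] with x hx
    exact mul_nonneg (Nat.cast_nonneg _) hx.le
  · filter_upwards [self_mem_nhdsWithin, Ioo_mem_nhdsGT zero_lt_one] with x hx hx1
    have hneg : 0 ≤ -logb 2 x := neg_nonneg.2 (logb_nonpos one_lt_two hx.le hx1.2.le)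
    calc (⌈-logb 2 x⌉₊ : ℝ) * x ≤ (-logb 2 x + 1) * x :=
          mul_le_mul_of_nonneg_right (Nat.ceil_lt_add_one hneg).le hx.le
      _ = -(log x * x) / log 2 + x := by rw [logb]; ring

lemma exists_dyadic_shell {T x : ℝ} {N : ℕ} (hx : T < x) (hxN : x ≤ T * 2 ^ N) :
    ∃ k < N, T * 2 ^ k < x ∧ x ≤ T * 2 ^ (k + 1) := by
  induction N with
  | zero => exact absurd (hx.trans_le (by simpa using hxN)) (lt_irrefl T)
  | succ n ih =>
    by_cases hn : x ≤ T * 2 ^ n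
    · obtain ⟨k, hk, hxk⟩ := ih hn
      exact ⟨k, hk.trans n.lt_succ_self, hxk⟩
    · exact ⟨n, n.lt_succ_self, not_le.1 hn, hxN⟩

lemma dyadic_cover_of_mul_lt {u v c T : ℝ} {N : ℕ} (hT : 0 < T) (hTN : 1 ≤ T * 2 ^ N)
    (hv : 0 < v) (huv : u * v < c) :
    u ≤ T ∨ v ≤ c ∨ ∃ k < N, (T * 2 ^ k < u ∧ u ≤ T * 2 ^ (k + 1)) ∧ v ≤ c / (T * 2 ^ k) := by
  have hv_of_le {s : ℝ} (hs : 0 < s) (hsu : s ≤ u) : v ≤ c / s :=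
    (le_div_iff₀ hs).2 (by nlinarith)
  rcases le_or_gt u T with huT | hTu
  · exact Or.inl huT
  rcases le_or_gt u (T * 2 ^ N) with huN | hNu
  · obtain ⟨k, hk, hku⟩ := exists_dyadic_shell hTu huN
    exact Or.inr (Or.inr ⟨k, hk, hku, hv_of_le (by positivity) hku.1.le⟩)
  · refine Or.inr (Or.inl ?_)
    calc v ≤ c / (T * 2 ^ N) := hv_of_le (by positivity) hNu.le
      _ ≤ c := div_le_self (by nlinarith) hTN

/-- On the `k`-th dyadic shell `T 2^k < X - x₀ ≤ T 2^(k+1)` one has `W - w₀ < c / (T 2^k)`, so by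
independence each shell has probability at most `α β c`. -/
theorem measure_hyperbolic_region_le {Ω : Type*} [MeasurableSpace Ω] {P : Measure Ω}
    {X W : Ω → ℝ} {α β : ℝ} (hXW : IndepFun X W P) (hα : 0 ≤ α) (hβ : 0 ≤ β)
    (hX : ∀ s t, P (X ⁻¹' Ioc s t) ≤ ENNReal.ofReal (α * (t - s)))
    (hW : ∀ s t, P (W ⁻¹' Ioc s t) ≤ ENNReal.ofReal (β * (t - s)))
    (x₀ w₀ : ℝ) {c T : ℝ} (hc : 0 ≤ c) (hT : 0 < T) {N : ℕ} (hTN : 1 ≤ T * 2 ^ N) :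
    P (X ⁻¹' Ioi x₀ ∩ W ⁻¹' Ioi w₀ ∩ {ω | (X ω - x₀) * (W ω - w₀) < c}) ≤
      ENNReal.ofReal (α * T + β * c + N * (α * β * c)) := by
  set shell : ℕ → Set Ω := fun k => X ⁻¹' Ioc (x₀ + T * 2 ^ k) (x₀ + T * 2 ^ (k + 1)) ∩
    W ⁻¹' Ioc w₀ (w₀ + c / (T * 2 ^ k))
  have hcover : X ⁻¹' Ioi x₀ ∩ W ⁻¹' Ioi w₀ ∩ {ω | (X ω - x₀) * (W ω - w₀) < c} ⊆
      (X ⁻¹' Ioc x₀ (x₀ + T) ∪ W ⁻¹' Ioc w₀ (w₀ + c)) ∪ ⋃ k ∈ Finset.range N, shell k := by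
    rintro ω ⟨⟨hXω, hWω⟩, hprod⟩
    rcases dyadic_cover_of_mul_lt hT hTN (sub_pos.2 hWω) hprod with h | h | ⟨k, hk, hku, hkv⟩
    · exact Or.inl (Or.inl ⟨hXω, by linarith⟩)
    · exact Or.inl (Or.inr ⟨hWω, by linarith⟩)
    · exact Or.inr (mem_biUnion (Finset.mem_range.2 hk)
        ⟨⟨by linarith, by linarith⟩, hWω, by linarith⟩)
  have hshell (k : ℕ) : P (shell k) ≤ ENNReal.ofReal (α * β * c) := by
    have hTk : 0 < T * 2 ^ k := by positivity
    calc P (shell k) = P (X ⁻¹' Ioc (x₀ + T * 2 ^ k) (x₀ + T * 2 ^ (k + 1))) *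
          P (W ⁻¹' Ioc w₀ (w₀ + c / (T * 2 ^ k))) :=
          hXW.measure_inter_preimage_eq_mul _ _ measurableSet_Ioc measurableSet_Ioc
      _ ≤ ENNReal.ofReal (α * (T * 2 ^ k)) * ENNReal.ofReal (β * (c / (T * 2 ^ k))) := by
          gcongr
          · exact (hX _ _).trans_eq (by ring_nf)
          · exact (hW _ _).trans_eq (by ring_nf)
      _ = ENNReal.ofReal (α * β * c) := by
          rw [← ENNReal.ofReal_mul (by positivity)]
          congr 1
          field_simp
  calc _ ≤ P ((X ⁻¹' Ioc x₀ (x₀ + T) ∪ W ⁻¹' Ioc w₀ (w₀ + c)) ∪ ⋃ k ∈ Finset.range N, shell k) :=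
        measure_mono hcover
    _ ≤ (P (X ⁻¹' Ioc x₀ (x₀ + T)) + P (W ⁻¹' Ioc w₀ (w₀ + c))) +
          ∑ k ∈ Finset.range N, P (shell k) :=
        (measure_union_le _ _).trans (add_le_add (measure_union_le _ _)
          (measure_biUnion_finset_le _ _))
    _ ≤ (ENNReal.ofReal (α * T) + ENNReal.ofReal (β * c)) +
          ∑ _k ∈ Finset.range N, ENNReal.ofReal (α * β * c) := by
        gcongr with k
        · exact (hX _ _).trans_eq (by ring_nf)
        · exact (hW _ _).trans_eq (by ring_nf)
        · exact hshell k
    _ = ENNReal.ofReal (α * T + β * c + N * (α * β * c)) := by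
        rw [Finset.sum_const, Finset.card_range, nsmul_eq_mul, ← ENNReal.ofReal_natCast,
          ← ENNReal.ofReal_mul (Nat.cast_nonneg _), ← ENNReal.ofReal_add (by positivity)
          (by positivity), ← ENNReal.ofReal_add (by positivity) (by positivity)]

lemma mul_f_div_lt_iff {δ m h y z : ℝ} (hδ : 0 < δ) (hm : 0 < m) (hh : 0 < h)
    (hy : 0 ≤ y) (hz : 0 ≤ z) :
    δ * f (y / δ) (z / m) < h ↔ (y - h) * (z - h * (m / δ)) < h * (m + h * (m / δ)) := by
  have hD : 0 < y / δ + z / m + 1 := by positivity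
  have hlhs : δ * f (y / δ) (z / m) = y * z / (m * (y / δ + z / m + 1)) := by
    unfold f; field_simp
  rw [hlhs, div_lt_iff₀ (by positivity)]
  have hrhs : h * (m * (y / δ + z / m + 1)) = h * (m / δ) * y + h * z + h * m := by
    field_simp
  constructor <;> intro H <;> nlinarith

lemma sub_mul_sub_lt_iff {y z h η c : ℝ} (hy : 0 ≤ y) (hz : 0 ≤ z) (hh : 0 ≤ h) (hη : 0 ≤ η)
    (hc : h * η < c) :
    (y - h) * (z - η) < c ↔ ¬(h < y ∧ η < z) ∨ ((h < y ∧ η < z) ∧ (y - h) * (z - η) < c) := by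
  by_cases hyz : h < y ∧ η < z
  · simp [hyz]
  · simp only [hyz, not_false_eq_true, true_or, iff_true]
    rw [not_and_or, not_lt, not_lt] at hyz
    rcases hyz with hyh | hzη
    · rcases le_total z η with hzη | hηz <;> nlinarith [mul_nonneg hh hη]
    · rcases le_total y h with hyh | hhy <;> nlinarith [mul_nonneg hh hη]

section RelayPath

variable {Ω : Type*} [MeasurableSpace Ω] {P : Measure Ω} {lamY lamZ : ℝ} {Y Z : Ω → ℝ}

lemma relay_outage_real_eq [IsProbabilityMeasure P] (hlamY : 0 < lamY) (hlamZ : 0 < lamZ)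
    (hY : Measurable Y) (hZ : Measurable Z)
    (hYdist : Measure.map Y P = expMeasure lamY) (hZdist : Measure.map Z P = expMeasure lamZ)
    (hindep : IndepFun Y Z P) {δ m h : ℝ} (hδ : 0 < δ) (hm : 0 < m) (hh : 0 < h) :
    P.real {ω | δ * f (Y ω / δ) (Z ω / m) < h} =
      1 - exp (-(h * (lamY + lamZ * (m / δ)))) +
        P.real (Y ⁻¹' Ioi h ∩ Z ⁻¹' Ioi (h * (m / δ)) ∩
          {ω | (Y ω - h) * (Z ω - h * (m / δ)) < h * (m + h * (m / δ))}) := by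
  set η := h * (m / δ)
  have hη : 0 < η := by positivity
  set G := Y ⁻¹' Ioi h ∩ Z ⁻¹' Ioi η
  set H := {ω | (Y ω - h) * (Z ω - η) < h * (m + η)}
  have hY0 : ∀ᵐ ω ∂P, 0 ≤ Y ω :=
    ae_of_ae_map hY.aemeasurable (hYdist ▸ ae_nonneg_expMeasure hlamY)
  have hZ0 : ∀ᵐ ω ∂P, 0 ≤ Z ω :=
    ae_of_ae_map hZ.aemeasurable (hZdist ▸ ae_nonneg_expMeasure hlamZ)
  have hsplit : {ω | δ * f (Y ω / δ) (Z ω / m) < h} =ᵐ[P] (Gᶜ ∪ (G ∩ H) : Set Ω) := by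
    filter_upwards [hY0, hZ0] with ω hy hz
    exact propext ((mul_f_div_lt_iff hδ hm hh hy hz).trans
      (sub_mul_sub_lt_iff hy hz hh.le hη.le (by nlinarith [mul_pos hh hm] : h * η < h * (m + η))))
  have hG : P.real G = exp (-(lamY * h)) * exp (-(lamZ * η)) := by
    rw [measureReal_def, hindep.measure_inter_preimage_eq_mul _ _ measurableSet_Ioi
      measurableSet_Ioi, ENNReal.toReal_mul, ← measureReal_def, ← measureReal_def,
      ← map_measureReal_apply hY measurableSet_Ioi, ← map_measureReal_apply hZ measurableSet_Ioi,
      hYdist, hZdist, expMeasure_real_Ioi hlamY hh.le, expMeasure_real_Ioi hlamZ hη.le]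
  have hHmeas : MeasurableSet H := measurableSet_lt (by fun_prop) measurable_const
  rw [measureReal_congr hsplit,
    measureReal_union (disjoint_compl_left.mono_right inter_subset_left)
      ((hY measurableSet_Ioi).inter (hZ measurableSet_Ioi) |>.inter hHmeas),
    probReal_compl_eq_one_sub ((hY measurableSet_Ioi).inter (hZ measurableSet_Ioi)), hG,
    ← exp_add]
  congr 3
  ring

lemma relay_hyperbolic_real_le (hlamY : 0 < lamY) (hlamZ : 0 < lamZ)
    (hY : Measurable Y) (hZ : Measurable Z)
    (hYdist : Measure.map Y P = expMeasure lamY) (hZdist : Measure.map Z P = expMeasure lamZ)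
    (hindep : IndepFun Y Z P) {δ m h : ℝ} (hδ : 0 < δ) (hm : 0 < m) (hh : 0 < h) :
    P.real (Y ⁻¹' Ioi h ∩ Z ⁻¹' Ioi (h * (m / δ)) ∩
        {ω | (Y ω - h) * (Z ω - h * (m / δ)) < h * (m + h * (m / δ))}) ≤
      h * (lamY * h + m / δ * (δ / h + 1) *
        (lamZ * h + 2 * lamY * lamZ * (⌈-logb 2 h⌉₊ * h))) := by
  have hlip {X : Ω → ℝ} {r : ℝ} (hr : 0 < r) (hX : Measurable X)
      (hdist : Measure.map X P = expMeasure r) (s t : ℝ) :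
      P (X ⁻¹' Ioc s t) ≤ ENNReal.ofReal (r * (t - s)) := by
    rw [← Measure.map_apply hX measurableSet_Ioc, hdist]
    exact expMeasure_Ioc_le hr.le s t
  set n := ⌈-logb 2 h⌉₊
  -- `T = h²` and `N = 2n` dyadic shells, which reach `h² 2^N ≥ 1`
  have hN : 1 ≤ h ^ 2 * 2 ^ (2 * n) := by
    rw [pow_mul', ← mul_pow]
    exact one_le_pow₀ (one_le_mul_two_pow_natCeil_neg_logb hh)
  refine (ENNReal.toReal_le_of_le_ofReal (by positivity)
    (measure_hyperbolic_region_le hindep hlamY.le hlamZ.le (hlip hlamY hY hYdist)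
      (hlip hlamZ hZ hZdist) h (h * (m / δ)) (by positivity) (by positivity) hN)).trans_eq ?_
  push_cast
  field_simp
  ring

lemma relay_outage_div_bounds [IsProbabilityMeasure P] (hlamY : 0 < lamY) (hlamZ : 0 < lamZ)
    (hY : Measurable Y) (hZ : Measurable Z)
    (hYdist : Measure.map Y P = expMeasure lamY) (hZdist : Measure.map Z P = expMeasure lamZ)
    (hindep : IndepFun Y Z P) {δ m h : ℝ} (hδ : 0 < δ) (hm : 0 < m) (hh : 0 < h) :
    (1 - exp (-(h * (lamY + lamZ * (m / δ))))) / h ≤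
        1 / h * (P {ω | δ * f (Y ω / δ) (Z ω / m) < h}).toReal ∧
      1 / h * (P {ω | δ * f (Y ω / δ) (Z ω / m) < h}).toReal ≤
        (1 - exp (-(h * (lamY + lamZ * (m / δ))))) / h + (lamY * h + m / δ * (δ / h + 1) *
          (lamZ * h + 2 * lamY * lamZ * (⌈-logb 2 h⌉₊ * h))) := by
  rw [← measureReal_def, relay_outage_real_eq hlamY hlamZ hY hZ hYdist hZdist hindep hδ hm hh,
    one_div_mul_eq_div, add_div]
  exact ⟨le_add_of_nonneg_right (div_nonneg measureReal_nonneg hh.le),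
    add_le_add le_rfl ((div_le_iff₀' hh).2
      (relay_hyperbolic_real_le hlamY hlamZ hY hZ hYdist hZdist hindep hδ hm hh))⟩

end RelayPath

theorem lemma2_relay_path_asymptotics_general
    {Ω : Type*} [MeasurableSpace Ω] (P : Measure Ω) [IsProbabilityMeasure P]
    (lamY lamZ : ℝ) (hlamY : 0 < lamY) (hlamZ : 0 < lamZ)
    (Y Z : Ω → ℝ) (hY : Measurable Y) (hZ : Measurable Z)
    (hYdist : Measure.map Y P = expMeasure lamY)
    (hZdist : Measure.map Z P = expMeasure lamZ)
    (hindep : IndepFun Y Z P)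
    (μ : ℝ → ℝ) (hμ_pos : ∀ δ ∈ Ioi (0:ℝ), 0 < μ δ)
    (a : ℝ)
    (hμa : Tendsto (fun δ => μ δ / δ) (nhdsWithin 0 (Ioi 0)) (nhds a))
    (h : ℝ → ℝ) (hh_pos : ∀ δ ∈ Ioi (0:ℝ), 0 < h δ)
    (hh_lim : Tendsto h (nhdsWithin 0 (Ioi 0)) (nhds 0))
    (d₁ : ℝ)
    (hd₁ : Tendsto (fun δ => δ / h δ) (nhdsWithin 0 (Ioi 0)) (nhds d₁)) :
    Tendsto
      (fun δ => (1 / h δ) * (P {ω | δ * f (Y ω / δ) (Z ω / μ δ) < h δ}).toReal)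
      (nhdsWithin 0 (Ioi 0)) (nhds (lamY + a * lamZ)) := by
  have hpos : ∀ᶠ δ in 𝓝[>] (0:ℝ), 0 < δ ∧ 0 < μ δ ∧ 0 < h δ := by
    filter_upwards [self_mem_nhdsWithin] with δ hδ using ⟨hδ, hμ_pos δ hδ, hh_pos δ hδ⟩
  have hh : Tendsto h (𝓝[>] 0) (𝓝[>] 0) :=
    tendsto_nhdsWithin_iff.2 ⟨hh_lim, hpos.mono fun _ hδ => hδ.2.2⟩
  have hmain : Tendsto (fun δ => (1 - exp (-(h δ * (lamY + lamZ * (μ δ / δ))))) / h δ)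
      (𝓝[>] 0) (𝓝 (lamY + a * lamZ)) := by
    simpa only [mul_comm lamZ a] using tendsto_one_sub_exp_neg_mul_div hh
      ((tendsto_const_nhds (x := lamY)).add ((tendsto_const_nhds (x := lamZ)).mul hμa))
  have herr : Tendsto (fun δ => lamY * h δ + μ δ / δ * (δ / h δ + 1) *
      (lamZ * h δ + 2 * lamY * lamZ * (⌈-logb 2 (h δ)⌉₊ * h δ))) (𝓝[>] 0) (𝓝 0) := by
    simpa using (tendsto_const_nhds.mul hh_lim).add ((hμa.mul (hd₁.add_const 1)).mul
      ((tendsto_const_nhds.mul hh_lim).add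
        (tendsto_const_nhds.mul (tendsto_natCeil_neg_logb_mul_self.comp hh))))
  refine tendsto_of_tendsto_of_tendsto_of_le_of_le' hmain (by simpa using hmain.add herr) ?_ ?_ <;>
    filter_upwards [hpos] with δ ⟨hδ, hμ, hhδ⟩
  · exact (relay_outage_div_bounds hlamY hlamZ hY hZ hYdist hZdist hindep hδ hμ hhδ).1
  · exact (relay_outage_div_bounds hlamY hlamZ hY hZ hYdist hZdist hindep hδ hμ hhδ).2

/-- **Lemma 2 of the paper.**
For independent `Y ~ Exp(λ_Y)`, `Z ~ Exp(λ_Z)`, with `μ(δ)/δ → a` and a continuous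
positive `h` with `h(δ) → 0` and `δ/h(δ) → d₁ < ∞` as `δ → 0⁺`,
`lim_{δ → 0⁺} (1/h(δ)) · P( δ·f(Y/δ, Z/μ(δ)) < h(δ) ) = λ_Y + a·λ_Z`. -/
theorem lemma2_relay_path_asymptotics
    {Ω : Type*} [MeasurableSpace Ω] (P : Measure Ω) [IsProbabilityMeasure P]
    (lamY lamZ : ℝ) (hlamY : 0 < lamY) (hlamZ : 0 < lamZ)
    (Y Z : Ω → ℝ) (hY : Measurable Y) (hZ : Measurable Z)
    (hYdist : Measure.map Y P = expMeasure lamY)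
    (hZdist : Measure.map Z P = expMeasure lamZ)
    (hindep : IndepFun Y Z P)
    (μ : ℝ → ℝ) (hμ_pos : ∀ δ ∈ Ioi (0:ℝ), 0 < μ δ)
    (a : ℝ) (ha : 0 ≤ a)
    (hμa : Tendsto (fun δ => μ δ / δ) (nhdsWithin 0 (Ioi 0)) (nhds a))
    (h : ℝ → ℝ) (hh_pos : ∀ δ ∈ Ioi (0:ℝ), 0 < h δ)
    (hh_cont : ContinuousOn h (Ioi 0))
    (hh_lim : Tendsto h (nhdsWithin 0 (Ioi 0)) (nhds 0))
    (d₁ : ℝ)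
    (hd₁ : Tendsto (fun δ => δ / h δ) (nhdsWithin 0 (Ioi 0)) (nhds d₁)) :
    Tendsto
      (fun δ => (1 / h δ) * (P {ω | δ * f (Y ω / δ) (Z ω / μ δ) < h δ}).toReal)
      (nhdsWithin 0 (Ioi 0)) (nhds (lamY + a * lamZ)) :=
  lemma2_relay_path_asymptotics_general P lamY lamZ hlamY hlamZ Y Z hY hZ hYdist hZdist hindep μ
    hμ_pos a hμa h hh_pos hh_lim d₁ hd₁
end

section
/- Let Y and Z be independent random variables with Y ~ Exp(λ_Y) and Z ~ Exp(λ_Z), where λ_Y, λ_Z > 0. Let μ : (0,∞) → (0,∞) satisfy μ(δ)/δ → a as δ → 0⁺ for some finite a ≥ 0, and let h : (0,∞) → (0,∞) be continuous with h(δ) → 0 and δ/h(δ) → d₁ for some finite d₁ as δ → 0⁺. Then limsup_{δ → 0⁺} (1/h(δ)) · P( δ · f(Y/δ, Z/μ(δ)) < h(δ) ) ≤ λ_Y + a·λ_Z. -/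
open MeasureTheory ProbabilityTheory Filter Set

/-!
Split the event according to the first hop `Y`. The exponential law gives `P(X ≤ t) ≤ λ t`, so
`Y ≤ (1 + ε) h` costs at most `λ_Y (1 + ε) h`. If `Y ≥ s > h`, then `δ f(Y/δ, Z/μ) < h` forces
`Z < h μ (s + δ) / (δ (s - h))`. For `(1 + ε) h ≤ Y ≤ T` this threshold is of order `h / ε`, and
independence multiplies its cost by `P(Y ≤ T) ≤ λ_Y T`; for `Y > T` it is `a h (1 + o(1))`.
Dividing by `h` and letting `δ → 0`, then `T → 0`, then `ε → 0` leaves `λ_Y + a λ_Z`.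
-/

open Topology

lemma expMeasure_real_Iic_le {l : ℝ} (hl : 0 < l) {t : ℝ} (ht : 0 ≤ t) :
    (expMeasure l).real (Iic t) ≤ l * t := by
  have := isProbabilityMeasure_expMeasure hl
  rw [← cdf_eq_real, cdf_expMeasure_eq hl, if_pos ht]
  linarith [Real.add_one_le_exp (-(l * t))]

lemma measureReal_preimage_Iic_le_of_map_eq_expMeasure {Ω : Type*} [MeasurableSpace Ω]
    {P : Measure Ω} {X : Ω → ℝ} (hX : Measurable X) {l : ℝ} (hl : 0 < l)
    (hXdist : P.map X = expMeasure l) {t : ℝ} (ht : 0 ≤ t) :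
    P.real (X ⁻¹' Iic t) ≤ l * t := by
  rw [← map_measureReal_apply hX measurableSet_Iic, hXdist]
  exact expMeasure_real_Iic_le hl ht

noncomputable def secondHopThreshold (δ M H s : ℝ) : ℝ := H * M * (s + δ) / (δ * (s - H))

lemma lt_secondHopThreshold_of_mul_f_lt {δ M H s y z : ℝ} (hδ : 0 < δ) (hM : 0 < M)
    (hH : 0 < H) (hs : H < s) (hsy : s ≤ y) (hf : δ * f (y / δ) (z / M) < H) :
    z < secondHopThreshold δ M H s := by
  have hpos : 0 < δ * (s - H) := mul_pos hδ (by linarith)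
  unfold secondHopThreshold
  rw [lt_div_iff₀ hpos]
  rcases le_or_gt z 0 with hz | hz
  · nlinarith [mul_pos (mul_pos hH hM) (show 0 < s + δ by linarith)]
  have hy : 0 < y := by linarith
  have hcleared : z * δ * (y - H) < H * M * (y + δ) := by
    unfold f at hf
    rw [← mul_div_assoc, div_lt_iff₀ (by positivity)] at hf
    have := mul_lt_mul_of_pos_right hf (mul_pos hδ hM)
    field_simp at this
    nlinarith
  -- `y ↦ (y + δ) / (y - H)` decreases on `y > H`
  have hmono : (s - H) * (y + δ) ≤ (y - H) * (s + δ) := by nlinarith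
  nlinarith [mul_le_mul_of_nonneg_left hmono (show 0 ≤ z * δ by positivity)]

lemma secondHopThreshold_pos {δ M H s : ℝ} (hδ : 0 < δ) (hM : 0 < M) (hH : 0 < H)
    (hs : H < s) : 0 < secondHopThreshold δ M H s :=
  div_pos (mul_pos (mul_pos hH hM) (by linarith)) (mul_pos hδ (by linarith))

lemma relay_event_subset {Ω : Type*} {Y Z : Ω → ℝ} {δ M H ε T : ℝ} (hδ : 0 < δ) (hM : 0 < M)
    (hH : 0 < H) (hε : 0 < ε) (hT : H < T) :
    {ω | δ * f (Y ω / δ) (Z ω / M) < H} ⊆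
      Y ⁻¹' Iic ((1 + ε) * H)
        ∪ (Y ⁻¹' Iic T ∩ Z ⁻¹' Iic (secondHopThreshold δ M H ((1 + ε) * H)))
        ∪ Z ⁻¹' Iic (secondHopThreshold δ M H T) := by
  intro ω hω
  rcases le_or_gt (Y ω) ((1 + ε) * H) with hsmall | hmid
  · exact Or.inl (Or.inl hsmall)
  rcases le_or_gt (Y ω) T with hle | hlarge
  · exact Or.inl (Or.inr ⟨hle,
      (lt_secondHopThreshold_of_mul_f_lt hδ hM hH (by nlinarith) hmid.le hω).le⟩)
  · exact Or.inr (lt_secondHopThreshold_of_mul_f_lt hδ hM hH hT hlarge.le hω).le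

noncomputable def relayEventBound (lamY lamZ ε T δ M H : ℝ) : ℝ :=
  lamY * ((1 + ε) * H) + lamY * T * (lamZ * secondHopThreshold δ M H ((1 + ε) * H))
    + lamZ * secondHopThreshold δ M H T

lemma measureReal_relay_event_le {Ω : Type*} [MeasurableSpace Ω] {P : Measure Ω}
    [IsProbabilityMeasure P] {Y Z : Ω → ℝ} {lamY lamZ : ℝ} (hY : Measurable Y)
    (hZ : Measurable Z) (hlamY : 0 < lamY) (hlamZ : 0 < lamZ)
    (hYdist : P.map Y = expMeasure lamY) (hZdist : P.map Z = expMeasure lamZ)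
    (hindep : IndepFun Y Z P) {δ M H ε T : ℝ} (hδ : 0 < δ) (hM : 0 < M) (hH : 0 < H)
    (hε : 0 < ε) (hT : H < T) :
    P.real {ω | δ * f (Y ω / δ) (Z ω / M) < H} ≤ relayEventBound lamY lamZ ε T δ M H := by
  have hH₁ : H < (1 + ε) * H := by nlinarith
  have hc₁ := secondHopThreshold_pos hδ hM hH hH₁
  have hc₂ := secondHopThreshold_pos hδ hM hH hT
  have hmid : P.real (Y ⁻¹' Iic T ∩ Z ⁻¹' Iic (secondHopThreshold δ M H ((1 + ε) * H))) ≤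
      lamY * T * (lamZ * secondHopThreshold δ M H ((1 + ε) * H)) := by
    rw [measureReal_def, hindep.measure_inter_preimage_eq_mul _ _ measurableSet_Iic
      measurableSet_Iic, ENNReal.toReal_mul]
    exact mul_le_mul
      (measureReal_preimage_Iic_le_of_map_eq_expMeasure hY hlamY hYdist (by linarith))
      (measureReal_preimage_Iic_le_of_map_eq_expMeasure hZ hlamZ hZdist hc₁.le)
      ENNReal.toReal_nonneg (by nlinarith)
  calc P.real {ω | δ * f (Y ω / δ) (Z ω / M) < H}
      ≤ P.real (Y ⁻¹' Iic ((1 + ε) * H)) +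
          P.real (Y ⁻¹' Iic T ∩ Z ⁻¹' Iic (secondHopThreshold δ M H ((1 + ε) * H))) +
          P.real (Z ⁻¹' Iic (secondHopThreshold δ M H T)) :=
        (measureReal_mono (relay_event_subset hδ hM hH hε hT)).trans
          ((measureReal_union_le _ _).trans (add_le_add_left (measureReal_union_le _ _) _))
    _ ≤ _ := by
        unfold relayEventBound
        gcongr
        · exact measureReal_preimage_Iic_le_of_map_eq_expMeasure hY hlamY hYdist (by linarith)
        · exact measureReal_preimage_Iic_le_of_map_eq_expMeasure hZ hlamZ hZdist hc₂.le

lemma tendsto_one_div_mul_relayEventBound {μ h : ℝ → ℝ} {a d₁ lamY lamZ ε T : ℝ}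
    (hε : 0 < ε) (hT : 0 < T) (hh_pos : ∀ δ ∈ Ioi (0 : ℝ), 0 < h δ)
    (hμa : Tendsto (fun δ => μ δ / δ) (𝓝[>] 0) (𝓝 a))
    (hh_lim : Tendsto h (𝓝[>] 0) (𝓝 0))
    (hd₁ : Tendsto (fun δ => δ / h δ) (𝓝[>] 0) (𝓝 d₁)) :
    Tendsto (fun δ => 1 / h δ * relayEventBound lamY lamZ ε T δ (μ δ) (h δ)) (𝓝[>] 0)
      (𝓝 (lamY * (1 + ε) + lamY * lamZ * T * (a * ((1 + ε) + d₁) / ε) + lamZ * a)) := by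
  have hid : Tendsto (fun δ : ℝ => δ) (𝓝[>] 0) (𝓝 0) :=
    tendsto_nhdsWithin_of_tendsto_nhds tendsto_id
  have hlim : Tendsto (fun δ => lamY * (1 + ε)
        + lamY * lamZ * T * (μ δ / δ * ((1 + ε) + δ / h δ) / ε)
        + lamZ * (μ δ / δ * (T + δ) / (T - h δ))) (𝓝[>] 0)
      (𝓝 (lamY * (1 + ε) + lamY * lamZ * T * (a * ((1 + ε) + d₁) / ε)
        + lamZ * (a * (T + 0) / (T - 0)))) :=
    (tendsto_const_nhds.add (tendsto_const_nhds.mul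
      ((hμa.mul (tendsto_const_nhds.add hd₁)).div_const ε))).add
    (tendsto_const_nhds.mul ((hμa.mul (tendsto_const_nhds.add hid)).div
      (tendsto_const_nhds.sub hh_lim) (by simpa using hT.ne')))
  rw [add_zero, sub_zero, mul_div_cancel_right₀ _ hT.ne'] at hlim
  refine hlim.congr' ?_
  filter_upwards [self_mem_nhdsWithin, hh_lim.eventually_lt_const hT] with δ hδ hhT
  have hhδ := hh_pos δ hδ
  have : T - h δ ≠ 0 := by linarith
  unfold relayEventBound secondHopThreshold
  rw [show (1 + ε) * h δ - h δ = ε * h δ by ring]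
  field_simp

theorem relay_path_limsup_upper_bound_general
    {Ω : Type*} [MeasurableSpace Ω] (P : Measure Ω) [IsProbabilityMeasure P]
    (lamY lamZ : ℝ) (hlamY : 0 < lamY) (hlamZ : 0 < lamZ)
    (Y Z : Ω → ℝ) (hY : Measurable Y) (hZ : Measurable Z)
    (hYdist : Measure.map Y P = expMeasure lamY)
    (hZdist : Measure.map Z P = expMeasure lamZ)
    (hindep : IndepFun Y Z P)
    (μ : ℝ → ℝ) (hμ_pos : ∀ δ ∈ Ioi (0:ℝ), 0 < μ δ)
    (a : ℝ)
    (hμa : Tendsto (fun δ => μ δ / δ) (nhdsWithin 0 (Ioi 0)) (nhds a))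
    (h : ℝ → ℝ) (hh_pos : ∀ δ ∈ Ioi (0:ℝ), 0 < h δ)
    (hh_lim : Tendsto h (nhdsWithin 0 (Ioi 0)) (nhds 0))
    (d₁ : ℝ)
    (hd₁ : Tendsto (fun δ => δ / h δ) (nhdsWithin 0 (Ioi 0)) (nhds d₁)) :
    Filter.limsup
        (fun δ => (1 / h δ) * (P {ω | δ * f (Y ω / δ) (Z ω / μ δ) < h δ}).toReal)
        (nhdsWithin 0 (Ioi 0)) ≤ lamY + a * lamZ := by
  set F := fun δ => (1 / h δ) * (P {ω | δ * f (Y ω / δ) (Z ω / μ δ) < h δ}).toReal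
  have hF_cobdd : IsCoboundedUnder (· ≤ ·) (𝓝[>] 0) F :=
    isCoboundedUnder_le_of_eventually_le _ <| eventually_nhdsWithin_of_forall fun δ hδ =>
      mul_nonneg (one_div_nonneg.2 (hh_pos δ hδ).le) ENNReal.toReal_nonneg
  have hεT : ∀ ε > 0, ∀ T > 0, limsup F (𝓝[>] 0) ≤
      lamY * (1 + ε) + lamY * lamZ * T * (a * ((1 + ε) + d₁) / ε) + lamZ * a := by
    intro ε hε T hT
    have hG := tendsto_one_div_mul_relayEventBound (lamY := lamY) (lamZ := lamZ) hε hT hh_pos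
      hμa hh_lim hd₁
    refine (limsup_le_limsup ?_ hF_cobdd hG.isBoundedUnder_le).trans_eq hG.limsup_eq
    filter_upwards [self_mem_nhdsWithin, hh_lim.eventually_lt_const hT] with δ hδ hhT
    exact mul_le_mul_of_nonneg_left (measureReal_relay_event_le hY hZ hlamY hlamZ hYdist hZdist
      hindep hδ (hμ_pos δ hδ) (hh_pos δ hδ) hε hhT) (one_div_nonneg.2 (hh_pos δ hδ).le)
  have hε : ∀ ε > 0, limsup F (𝓝[>] 0) ≤ lamY * (1 + ε) + lamZ * a := by
    intro ε hε
    have hT0 : Tendsto (fun T => lamY * (1 + ε) + lamY * lamZ * T * (a * ((1 + ε) + d₁) / ε)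
        + lamZ * a) (𝓝[>] 0) (𝓝 (lamY * (1 + ε) + lamZ * a)) :=
      tendsto_nhdsWithin_of_tendsto_nhds ((by fun_prop : Continuous _).tendsto' _ _ (by ring))
    exact ge_of_tendsto hT0 (eventually_nhdsWithin_of_forall (hεT ε hε))
  have hε0 : Tendsto (fun ε => lamY * (1 + ε) + lamZ * a) (𝓝[>] 0) (𝓝 (lamY + a * lamZ)) :=
    tendsto_nhdsWithin_of_tendsto_nhds ((by fun_prop : Continuous _).tendsto' _ _ (by ring))
  exact ge_of_tendsto hε0 (eventually_nhdsWithin_of_forall hε)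

/-- **limsup/converse half of Lemma 2 of the paper.**
For independent `Y ~ Exp(λ_Y)`, `Z ~ Exp(λ_Z)`, with `μ(δ)/δ → a` and a continuous
positive `h` with `h(δ) → 0` and `δ/h(δ) → d₁ < ∞` as `δ → 0⁺`,
`limsup_{δ → 0⁺} (1/h(δ)) · P( δ·f(Y/δ, Z/μ(δ)) < h(δ) ) ≤ λ_Y + a·λ_Z`. -/
theorem relay_path_limsup_upper_bound
    {Ω : Type*} [MeasurableSpace Ω] (P : Measure Ω) [IsProbabilityMeasure P]
    (lamY lamZ : ℝ) (hlamY : 0 < lamY) (hlamZ : 0 < lamZ)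
    (Y Z : Ω → ℝ) (hY : Measurable Y) (hZ : Measurable Z)
    (hYdist : Measure.map Y P = expMeasure lamY)
    (hZdist : Measure.map Z P = expMeasure lamZ)
    (hindep : IndepFun Y Z P)
    (μ : ℝ → ℝ) (hμ_pos : ∀ δ ∈ Ioi (0:ℝ), 0 < μ δ)
    (a : ℝ) (ha : 0 ≤ a)
    (hμa : Tendsto (fun δ => μ δ / δ) (nhdsWithin 0 (Ioi 0)) (nhds a))
    (h : ℝ → ℝ) (hh_pos : ∀ δ ∈ Ioi (0:ℝ), 0 < h δ)
    (hh_cont : ContinuousOn h (Ioi 0))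
    (hh_lim : Tendsto h (nhdsWithin 0 (Ioi 0)) (nhds 0))
    (d₁ : ℝ)
    (hd₁ : Tendsto (fun δ => δ / h δ) (nhdsWithin 0 (Ioi 0)) (nhds d₁)) :
    Filter.limsup
        (fun δ => (1 / h δ) * (P {ω | δ * f (Y ω / δ) (Z ω / μ δ) < h δ}).toReal)
        (nhdsWithin 0 (Ioi 0)) ≤ lamY + a * lamZ :=
  relay_path_limsup_upper_bound_general P lamY lamZ hlamY hlamZ Y Z hY hZ hYdist hZdist hindep μ
    hμ_pos a hμa h hh_pos hh_lim d₁ hd₁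
end

section
/- Let c₁, c₂ > 0 and ε > 0. Then there exist unique positive reals P₁, P₂, λ satisfying the three equations P₂³ = 2·λ·c₂, P₁³ = 3·c₁·P₂, and c₁·c₂/(P₁²·P₂²) = ε; moreover they are given explicitly by P₂ = ( c₁·c₂ / ( ε·(3 c₁)^{2/3} ) )^{3/8}, P₁ = (3 c₁ P₂)^{1/3}, and λ = P₂³/(2 c₂). -/
/-- **closed-form OPA for `M = 2`, Theorem 2 of the paper with `M = 2`.**
For `c₁, c₂, ε > 0` there exist unique positive reals `P₁, P₂, λ` satisfying
`P₂³ = 2·λ·c₂`, `P₁³ = 3·c₁·P₂` and `c₁·c₂/(P₁²·P₂²) = ε`; moreover they are given by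
`P₂ = (c₁·c₂/(ε·(3c₁)^{2/3}))^{3/8}`, `P₁ = (3c₁P₂)^{1/3}` and `λ = P₂³/(2c₂)`. -/
theorem closed_form_OPA_two_rounds
    (c₁ c₂ ε : ℝ) (hc₁ : 0 < c₁) (hc₂ : 0 < c₂) (hε : 0 < ε) :
    (∃! t : ℝ × ℝ × ℝ,
      (0 < t.1 ∧ 0 < t.2.1 ∧ 0 < t.2.2) ∧
      t.2.1 ^ 3 = 2 * t.2.2 * c₂ ∧
      t.1 ^ 3 = 3 * c₁ * t.2.1 ∧
      c₁ * c₂ / (t.1 ^ 2 * t.2.1 ^ 2) = ε) ∧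
    (∀ P₁ P₂ lam : ℝ, 0 < P₁ → 0 < P₂ → 0 < lam →
      P₂ ^ 3 = 2 * lam * c₂ →
      P₁ ^ 3 = 3 * c₁ * P₂ →
      c₁ * c₂ / (P₁ ^ 2 * P₂ ^ 2) = ε →
      P₂ = (c₁ * c₂ / (ε * (3 * c₁) ^ ((2 : ℝ) / 3))) ^ ((3 : ℝ) / 8) ∧
        P₁ = (3 * c₁ * P₂) ^ ((1 : ℝ) / 3) ∧
        lam = P₂ ^ 3 / (2 * c₂)) := by
  have h3c : (0:ℝ) < 3 * c₁ := by linarith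
  have hpow : (0:ℝ) < (3 * c₁) ^ ((2 : ℝ) / 3) := Real.rpow_pos_of_pos h3c _
  set A : ℝ := c₁ * c₂ / (ε * (3 * c₁) ^ ((2 : ℝ) / 3)) with hAdef
  have hA : 0 < A := by positivity
  -- the key uniqueness/characterization lemma
  have key : ∀ P₁ P₂ lam : ℝ, 0 < P₁ → 0 < P₂ → 0 < lam →
      P₂ ^ 3 = 2 * lam * c₂ →
      P₁ ^ 3 = 3 * c₁ * P₂ →
      c₁ * c₂ / (P₁ ^ 2 * P₂ ^ 2) = ε →
      P₂ = A ^ ((3 : ℝ) / 8) ∧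
        P₁ = (3 * c₁ * P₂) ^ ((1 : ℝ) / 3) ∧
        lam = P₂ ^ 3 / (2 * c₂) := by
    intro P₁ P₂ lam hP₁ hP₂ hlam h1 h2 h3
    have hP₁2 : P₁ ^ 2 = (3 * c₁) ^ ((2 : ℝ) / 3) * P₂ ^ ((2 : ℝ) / 3) := by
      have : P₁ ^ (2:ℕ) = (P₁ ^ (3:ℕ)) ^ ((2 : ℝ) / 3) := by
        rw [← Real.rpow_natCast P₁ 3, ← Real.rpow_mul hP₁.le,
          ← Real.rpow_natCast P₁ 2]
        norm_num
      rw [this, h2, Real.mul_rpow h3c.le hP₂.le]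
    have hP₂83 : P₂ ^ ((8 : ℝ) / 3) = A := by
      have hne : P₁ ^ 2 * P₂ ^ 2 ≠ 0 := by positivity
      have h3' : c₁ * c₂ = ε * (P₁ ^ 2 * P₂ ^ 2) := by
        field_simp at h3; linarith
      have hcomb : P₂ ^ ((2:ℝ)/3) * P₂ ^ (2:ℕ) = P₂ ^ ((8:ℝ)/3) := by
        rw [← Real.rpow_natCast P₂ 2, ← Real.rpow_add hP₂]
        norm_num
      rw [hAdef, eq_div_iff (by positivity)]
      rw [hP₁2] at h3'
      rw [show ε * ((3*c₁) ^ ((2:ℝ)/3) * P₂ ^ ((2:ℝ)/3) * P₂ ^ 2)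
            = ε * (3*c₁) ^ ((2:ℝ)/3) * (P₂ ^ ((2:ℝ)/3) * P₂ ^ 2) from by ring,
        hcomb] at h3'
      linarith
    have hP₂eq : P₂ = A ^ ((3 : ℝ) / 8) := by
      rw [← hP₂83, ← Real.rpow_mul hP₂.le]
      norm_num
    refine ⟨hP₂eq, ?_, ?_⟩
    · rw [← h2, ← Real.rpow_natCast P₁ 3, ← Real.rpow_mul hP₁.le]
      norm_num
    · rw [h1]; field_simp
  -- explicit solution
  set P₂ : ℝ := A ^ ((3 : ℝ) / 8) with hP₂def
  have hP₂ : 0 < P₂ := Real.rpow_pos_of_pos hA _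
  set P₁ : ℝ := (3 * c₁ * P₂) ^ ((1 : ℝ) / 3) with hP₁def
  have h3cP : (0:ℝ) < 3 * c₁ * P₂ := by positivity
  have hP₁ : 0 < P₁ := Real.rpow_pos_of_pos h3cP _
  set lam : ℝ := P₂ ^ 3 / (2 * c₂) with hlamdef
  have hlam : 0 < lam := by positivity
  have e1 : P₂ ^ 3 = 2 * lam * c₂ := by
    rw [hlamdef]; field_simp
  have e2 : P₁ ^ 3 = 3 * c₁ * P₂ := by
    rw [hP₁def, ← Real.rpow_natCast _ 3, ← Real.rpow_mul h3cP.le]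
    norm_num
  have hP₂83 : P₂ ^ ((8 : ℝ) / 3) = A := by
    rw [hP₂def, ← Real.rpow_mul hA.le]
    norm_num
  have e3 : c₁ * c₂ / (P₁ ^ 2 * P₂ ^ 2) = ε := by
    have hP₁2 : P₁ ^ 2 = (3 * c₁) ^ ((2 : ℝ) / 3) * P₂ ^ ((2 : ℝ) / 3) := by
      rw [hP₁def, ← Real.rpow_natCast _ 2, ← Real.rpow_mul h3cP.le,
        Real.mul_rpow h3c.le hP₂.le]
      norm_num
    have hcomb : P₂ ^ ((2:ℝ)/3) * P₂ ^ (2:ℕ) = P₂ ^ ((8:ℝ)/3) := by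
      rw [← Real.rpow_natCast P₂ 2, ← Real.rpow_add hP₂]
      norm_num
    have : P₁ ^ 2 * P₂ ^ 2 = (3 * c₁) ^ ((2 : ℝ) / 3) * A := by
      rw [hP₁2, mul_assoc]
      rw [show P₂ ^ (2:ℕ) = P₂ ^ 2 from rfl] at hcomb
      rw [hcomb, hP₂83]
    rw [this, hAdef]
    field_simp
  constructor
  · refine ⟨(P₁, P₂, lam), ⟨⟨hP₁, hP₂, hlam⟩, e1, e2, e3⟩, ?_⟩
    rintro ⟨q₁, q₂, ql⟩ ⟨⟨hq₁, hq₂, hql⟩, f1, f2, f3⟩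
    obtain ⟨g2, g1, gl⟩ := key q₁ q₂ ql hq₁ hq₂ hql f1 f2 f3
    simp only [Prod.mk.injEq]
    have hq2 : q₂ = P₂ := g2
    refine ⟨?_, hq2, ?_⟩
    · rw [g1, hq2, hP₁def]
    · rw [gl, hq2, hlamdef]
  · intro Q₁ Q₂ l hQ₁ hQ₂ hl k1 k2 k3
    exact key Q₁ Q₂ l hQ₁ hQ₂ hl k1 k2 k3
end
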